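/- The eta quotient η(16τ)²/η(8τ) equals the theta series over odd squares: η(16τ)²/η(8τ) = Σ_{n≥0} q^{(2n+1)²}, equivalently q (q¹⁶;q¹⁶)_∞² / (q⁸;q⁸)_∞ = Σ_{n≥0} q^{(2n+1)²} as power series in q. -/

import Mathlib

/-!
Put `u = w²`. The Gaussian binomials `[N, k]_u` satisfy two `q`-Pascal rules, whence a three-term
recurrence for the central ones `[2n, n + k]_u`, and by induction on `n` the finite form of Jacobi's
triple product `∑_{|k| ≤ n} [2n, n + k]_u w^{k(k+1)} = ∏_{j < n} (1 + u^{j+1}) (1 + u^j)`.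
For `‖w‖ < 1`, `[2n, n + k]_u → 1 / (u; u)_∞` as `n → ∞`, boundedly in `n` and `k`, so dominated
convergence gives Gauss's identity `∑_{n ≥ 0} w^{n(n+1)} = (u; u)_∞ (-u; u)_∞²`.
With `q = e^{2πiτ}`, `(q¹⁶; q¹⁶)_∞ = (q⁸; q⁸)_∞ (-q⁸; q⁸)_∞` turns `η(16τ)² / η(8τ)` into
`q (q⁸; q⁸)_∞ (-q⁸; q⁸)_∞²`, which is Gauss's identity at `w = q⁴` since
`q · q^{4n(n+1)} = q^{(2n+1)²}`.
-/

open Complex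

open scoped Real

/-- Dedekind eta function `η(τ) = e^{πiτ/12} ∏_{n ≥ 1} (1 − e^{2πinτ})`. -/
noncomputable def dedekindEta (τ : ℂ) : ℂ :=
  Complex.exp (π * I * τ / 12) * ∏' n : ℕ, (1 - Complex.exp (2 * π * I * τ) ^ (n + 1))

open Finset Filter Topology

section QBinomial

variable {K : Type*} [Field K] {u : K}

/-- `qPochhammer u m` is `(u; u)_m`. -/
noncomputable def qPochhammer (u : K) (m : ℕ) : K := ∏ j ∈ range m, (1 - u ^ (j + 1))

lemma qPochhammer_succ (u : K) (m : ℕ) :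
    qPochhammer u (m + 1) = qPochhammer u m * (1 - u ^ (m + 1)) :=
  prod_range_succ _ _

lemma qPochhammer_zero (u : K) : qPochhammer u 0 = 1 :=
  prod_range_zero _

lemma qPochhammer_ne_zero (hu : ∀ j : ℕ, u ^ (j + 1) ≠ 1) (m : ℕ) : qPochhammer u m ≠ 0 :=
  prod_ne_zero_iff.mpr fun j _ => sub_ne_zero.mpr (hu j).symm

/-- `qBinomial u N k` is `[N, k]_u`, extended by `0` to all `k : ℤ` so that shifted sums over `k`
need no boundary terms. -/
noncomputable def qBinomial (u : K) (N : ℕ) (k : ℤ) : K :=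
  if 0 ≤ k ∧ k ≤ N then
    qPochhammer u N / (qPochhammer u k.toNat * qPochhammer u (N - k.toNat))
  else 0

lemma qBinomial_of_lt_zero_or_lt (u : K) {N : ℕ} {k : ℤ} (h : k < 0 ∨ N < k) :
    qBinomial u N k = 0 :=
  if_neg (by omega)

lemma qBinomial_natCast (u : K) {N m : ℕ} (h : m ≤ N) :
    qBinomial u N m = qPochhammer u N / (qPochhammer u m * qPochhammer u (N - m)) := by
  rw [qBinomial, if_pos (by omega), Int.toNat_natCast]

lemma qBinomial_symm (u : K) (N : ℕ) (k : ℤ) : qBinomial u N (N - k) = qBinomial u N k := by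
  unfold qBinomial
  by_cases hk : 0 ≤ k ∧ k ≤ N
  · rw [if_pos (by omega), if_pos hk, show (N - k).toNat = N - k.toNat by omega,
      show N - (N - k.toNat) = k.toNat by omega, mul_comm]
  · rw [if_neg (by omega), if_neg hk]

lemma qBinomial_zero (hu : ∀ j : ℕ, u ^ (j + 1) ≠ 1) (N : ℕ) : qBinomial u N 0 = 1 := by
  rw [← Nat.cast_zero, qBinomial_natCast u (Nat.zero_le N), Nat.sub_zero,
    qPochhammer_zero, one_mul, div_self (qPochhammer_ne_zero hu N)]

lemma qBinomial_self (hu : ∀ j : ℕ, u ^ (j + 1) ≠ 1) (N : ℕ) : qBinomial u N N = 1 := by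
  rw [← qBinomial_symm, sub_self, qBinomial_zero hu]

lemma qBinomial_succ_succ (hu : ∀ j : ℕ, u ^ (j + 1) ≠ 1) (N : ℕ) (k : ℤ) :
    qBinomial u (N + 1) (k + 1) = qBinomial u N k + u ^ (k + 1) * qBinomial u N (k + 1) := by
  rcases (by omega : (k + 1 < 0 ∨ N < k) ∨ k = -1 ∨ k = N ∨ 0 ≤ k ∧ k < N) with
    h | rfl | rfl | ⟨hk₀, hkN⟩
  · rw [qBinomial_of_lt_zero_or_lt u (N := N + 1) (k := k + 1) (by push_cast; omega),
      qBinomial_of_lt_zero_or_lt u (k := k) (by omega),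
      qBinomial_of_lt_zero_or_lt u (k := k + 1) (by omega), mul_zero, add_zero]
  · rw [neg_add_cancel, qBinomial_zero hu, qBinomial_zero hu, zpow_zero, one_mul,
      qBinomial_of_lt_zero_or_lt u (Or.inl (by omega)), zero_add]
  · rw [show (N : ℤ) + 1 = (N + 1 : ℕ) by push_cast; ring, qBinomial_self hu,
      qBinomial_self hu, qBinomial_of_lt_zero_or_lt u (Or.inr (by omega)), mul_zero, add_zero]
  · obtain ⟨m, rfl⟩ := Int.eq_ofNat_of_zero_le hk₀
    obtain ⟨a, rfl⟩ : ∃ a, N = m + 1 + a := ⟨N - m - 1, by omega⟩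
    rw [show (m : ℤ) + 1 = (m + 1 : ℕ) by push_cast; ring, zpow_natCast,
      qBinomial_natCast u (by omega), qBinomial_natCast u (by omega),
      qBinomial_natCast u (by omega), show m + 1 + a + 1 - (m + 1) = a + 1 by omega,
      show m + 1 + a - m = a + 1 by omega, show m + 1 + a - (m + 1) = a by omega,
      qPochhammer_succ u (m + 1 + a), qPochhammer_succ u m, qPochhammer_succ u a]
    have := qPochhammer_ne_zero hu m
    have := qPochhammer_ne_zero hu a
    have := qPochhammer_ne_zero hu (m + 1 + a)
    have := sub_ne_zero.mpr (hu m).symm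
    have := sub_ne_zero.mpr (hu a).symm
    field_simp
    ring

lemma qBinomial_succ_succ' (hu : ∀ j : ℕ, u ^ (j + 1) ≠ 1) (N : ℕ) (k : ℤ) :
    qBinomial u (N + 1) (k + 1) =
      u ^ ((N : ℤ) - k) * qBinomial u N k + qBinomial u N (k + 1) := by
  have h := qBinomial_succ_succ hu N (N - k - 1)
  rw [show (N : ℤ) - k - 1 + 1 = N - k by ring, qBinomial_symm,
    show (N : ℤ) - k - 1 = N - (k + 1) by ring, qBinomial_symm] at h
  rw [← qBinomial_symm u (N + 1),
    show ((N + 1 : ℕ) : ℤ) - (k + 1) = N - k by push_cast; ring, h, add_comm]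

lemma qBinomial_central_succ (hu : ∀ j : ℕ, u ^ (j + 1) ≠ 1) (n : ℕ) (k : ℤ) :
    qBinomial u (2 * (n + 1)) (n + 1 + k) =
      (1 + u ^ (2 * n + 1)) * qBinomial u (2 * n) (n + k)
        + u ^ ((n : ℤ) + 1 - k) * qBinomial u (2 * n) (n + k - 1)
        + u ^ ((n : ℤ) + 1 + k) * qBinomial u (2 * n) (n + k + 1) := by
  have hpow :
      u ^ ((n : ℤ) + k + 1) * u ^ ((2 * n : ℕ) - ((n : ℤ) + k)) = u ^ (2 * n + 1) := by
    rw [← zpow_add' (Or.inr (Or.inl (by push_cast; omega))), ← zpow_natCast]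
    congr 1
    push_cast
    ring
  rw [show 2 * (n + 1) = (2 * n + 1) + 1 by ring, show (n : ℤ) + 1 + k = (n + k) + 1 by ring,
    qBinomial_succ_succ hu, qBinomial_succ_succ' hu, ← sub_add_cancel ((n : ℤ) + k) 1,
    qBinomial_succ_succ' hu, sub_add_cancel, ← hpow]
  push_cast
  ring_nf

lemma Finset.sum_Icc_comp_add_right {M : Type*} [AddCommMonoid M] (f : ℤ → M) (a b c : ℤ) :
    ∑ k ∈ Icc a b, f (k + c) = ∑ k ∈ Icc (a + c) (b + c), f k := by
  rw [← map_add_right_Icc, sum_map]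
  rfl

lemma sum_Icc_qBinomial_central_mul (u : K) (n : ℕ) (g : ℤ → K) {a b : ℤ} (ha : a ≤ -n)
    (hb : n ≤ b) :
    ∑ k ∈ Icc a b, qBinomial u (2 * n) (n + k) * g k =
      ∑ k ∈ Icc (-(n : ℤ)) n, qBinomial u (2 * n) (n + k) * g k := by
  refine (sum_subset (Icc_subset_Icc ha hb) fun k hk hk' => ?_).symm
  rw [mem_Icc] at hk hk'
  rw [qBinomial_of_lt_zero_or_lt u (by push_cast; omega), zero_mul]

noncomputable def finiteTheta (w : K) (n : ℕ) : K :=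
  ∑ k ∈ Icc (-(n : ℤ)) n, qBinomial (w ^ 2) (2 * n) (n + k) * w ^ (k * (k + 1))

lemma finiteTheta_succ {w : K} (hw₀ : w ≠ 0) (hw : ∀ j : ℕ, (w ^ 2) ^ (j + 1) ≠ 1)
    (n : ℕ) :
    finiteTheta w (n + 1) =
      finiteTheta w n * ((1 + (w ^ 2) ^ (n + 1)) * (1 + (w ^ 2) ^ n)) := by
  set F : ℤ → K := fun k => qBinomial (w ^ 2) (2 * n) (n + k) * w ^ (k * (k + 1))
  have hF : ∀ {a b : ℤ}, a ≤ -n → n ≤ b → ∑ k ∈ Icc a b, F k = finiteTheta w n :=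
    fun ha hb => sum_Icc_qBinomial_central_mul _ n _ ha hb
  have hterm : ∀ k : ℤ,
      qBinomial (w ^ 2) (2 * (n + 1)) ((n + 1 : ℕ) + k) * w ^ (k * (k + 1)) =
        (1 + (w ^ 2) ^ (2 * n + 1)) * F k + (w ^ 2) ^ (n + 1) * F (k + -1)
        + (w ^ 2) ^ n * F (k + 1) := by
    intro k
    have hsq : ∀ a b : ℤ, (w ^ 2) ^ a * w ^ b = w ^ (2 * a + b) := fun a b => by
      rw [← zpow_natCast, ← zpow_mul, ← zpow_add₀ hw₀, Nat.cast_ofNat]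
    have e₁ : (w ^ 2) ^ ((n : ℤ) + 1 - k) * w ^ (k * (k + 1)) =
        (w ^ 2) ^ (n + 1) * w ^ ((k + -1) * (k + -1 + 1)) := by
      rw [← zpow_natCast (w ^ 2), hsq, hsq]; push_cast; ring_nf
    have e₂ : (w ^ 2) ^ ((n : ℤ) + 1 + k) * w ^ (k * (k + 1)) =
        (w ^ 2) ^ n * w ^ ((k + 1) * (k + 1 + 1)) := by
      rw [← zpow_natCast (w ^ 2), hsq, hsq]; ring_nf
    simp only [F, Nat.cast_add, Nat.cast_one, qBinomial_central_succ hw]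
    rw [show (n : ℤ) + (k + -1) = n + k - 1 by ring, ← add_assoc]
    linear_combination qBinomial (w ^ 2) (2 * n) (n + k - 1) * e₁ +
      qBinomial (w ^ 2) (2 * n) (n + k + 1) * e₂
  rw [finiteTheta, sum_congr rfl fun k _ => hterm k, sum_add_distrib, sum_add_distrib,
    ← mul_sum, ← mul_sum, ← mul_sum, sum_Icc_comp_add_right F, sum_Icc_comp_add_right F,
    hF (by omega) (by omega), hF (by omega) (by omega), hF (by omega) (by omega)]
  ring

lemma finiteTheta_eq_prod {w : K} (hw₀ : w ≠ 0) (hw : ∀ j : ℕ, (w ^ 2) ^ (j + 1) ≠ 1)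
    (n : ℕ) :
    finiteTheta w n = ∏ j ∈ range n, ((1 + (w ^ 2) ^ (j + 1)) * (1 + (w ^ 2) ^ j)) := by
  induction n with
  | zero => simp [finiteTheta, qBinomial_zero hw]
  | succ n ih => rw [prod_range_succ, ← ih, finiteTheta_succ hw₀ hw]

end QBinomial

section Analytic

section NormedDivisionRing

variable {𝕜 : Type*} [NormedDivisionRing 𝕜] {x : 𝕜}

lemma norm_pow_lt_one (hx : ‖x‖ < 1) {n : ℕ} (hn : n ≠ 0) : ‖x ^ n‖ < 1 := by
  rw [norm_pow]
  exact pow_lt_one₀ (norm_nonneg x) hx hn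

lemma pow_succ_ne_one_of_norm_lt_one (hx : ‖x‖ < 1) (j : ℕ) : x ^ (j + 1) ≠ 1 := fun h =>
  (norm_pow_lt_one hx j.succ_ne_zero).ne (by rw [h, norm_one])

variable [CompleteSpace 𝕜]

lemma summable_pow_mul_add_one (hx : ‖x‖ < 1) : Summable fun n : ℕ => x ^ (n * (n + 1)) :=
  (summable_geometric_of_lt_one (norm_nonneg x) hx).of_norm_bounded fun n => by
    rw [norm_pow]
    exact pow_le_pow_of_le_one (norm_nonneg x) hx.le (Nat.le_mul_of_pos_right n n.succ_pos)

lemma hasSum_zpow_mul_add_one (hx : ‖x‖ < 1) :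
    HasSum (fun k : ℤ => x ^ (k * (k + 1))) (2 * ∑' n : ℕ, x ^ (n * (n + 1))) := by
  rw [two_mul]
  apply HasSum.of_nat_of_neg_add_one <;> convert (summable_pow_mul_add_one hx).hasSum using 2 with n
  · rw [← zpow_natCast]; push_cast; rfl
  · rw [← zpow_natCast]; push_cast; ring_nf

end NormedDivisionRing

lemma norm_prod_bounds_of_summable_norm_log {ι : Type*} {f : ι → ℂ} (hf : ∀ i, f i ≠ 0)
    (hs : Summable fun i => ‖log (f i)‖) (s : Finset ι) :
    Real.exp (-∑' i, ‖log (f i)‖) ≤ ‖∏ i ∈ s, f i‖ ∧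
      ‖∏ i ∈ s, f i‖ ≤ Real.exp (∑' i, ‖log (f i)‖) := by
  have hre : |(∑ i ∈ s, log (f i)).re| ≤ ∑' i, ‖log (f i)‖ :=
    (abs_re_le_norm _).trans <| (norm_sum_le _ _).trans <|
      hs.sum_le_tsum s fun i _ => norm_nonneg _
  rw [← Finset.prod_congr rfl fun i _ => exp_log (hf i), ← exp_sum, norm_exp]
  exact ⟨Real.exp_le_exp.2 (neg_le_of_abs_le hre), Real.exp_le_exp.2 (le_of_abs_le hre)⟩

variable {u : ℂ}

lemma summable_pow_succ (hu : ‖u‖ < 1) : Summable fun j : ℕ => u ^ (j + 1) :=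
  (summable_nat_add_iff 1).mpr (summable_geometric_of_norm_lt_one hu)

lemma tprod_one_sub_pow_ne_zero (hu : ‖u‖ < 1) : ∏' j : ℕ, (1 - u ^ (j + 1)) ≠ 0 := by
  simpa [sub_eq_add_neg] using tprod_one_add_ne_zero_of_summable (f := fun j => -u ^ (j + 1))
    (fun j => by
      simpa [sub_eq_add_neg] using sub_ne_zero.mpr (pow_succ_ne_one_of_norm_lt_one hu j).symm)
    (by simpa using (summable_pow_succ hu).norm)

lemma exists_norm_qPochhammer_bounds (hu : ‖u‖ < 1) :
    ∃ c > 0, ∀ m, c ≤ ‖qPochhammer u m‖ ∧ ‖qPochhammer u m‖ ≤ c⁻¹ := by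
  have hs : Summable fun j : ℕ => ‖log (1 - u ^ (j + 1))‖ := by
    simpa [sub_eq_add_neg] using
      (summable_log_one_add_of_summable (summable_pow_succ hu).neg).norm
  refine ⟨Real.exp (-∑' j : ℕ, ‖log (1 - u ^ (j + 1))‖), Real.exp_pos _, fun m => ?_⟩
  rw [← Real.exp_neg, neg_neg]
  exact norm_prod_bounds_of_summable_norm_log
    (fun j => sub_ne_zero.mpr (pow_succ_ne_one_of_norm_lt_one hu j).symm) hs _

lemma exists_norm_qBinomial_le (hu : ‖u‖ < 1) : ∃ C, ∀ N k, ‖qBinomial u N k‖ ≤ C := by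
  obtain ⟨c, hc, hbound⟩ := exists_norm_qPochhammer_bounds hu
  refine ⟨c⁻¹ / (c * c), fun N k => ?_⟩
  unfold qBinomial
  split_ifs
  · rw [norm_div, norm_mul]
    exact div_le_div₀ (by positivity) (hbound N).2 (by positivity)
      (mul_le_mul (hbound _).1 (hbound _).1 hc.le (norm_nonneg _))
  · rw [norm_zero]
    positivity

lemma tendsto_qPochhammer (hu : ‖u‖ < 1) :
    Tendsto (qPochhammer u) atTop (𝓝 (∏' j : ℕ, (1 - u ^ (j + 1)))) :=
  (ModularForm.multipliable_one_sub_pow hu).hasProd.tendsto_prod_nat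

lemma tendsto_qBinomial_central (hu : ‖u‖ < 1) (k : ℤ) :
    Tendsto (fun n : ℕ => qBinomial u (2 * n) (n + k)) atTop
      (𝓝 (∏' j : ℕ, (1 - u ^ (j + 1)))⁻¹) := by
  have hP := tprod_one_sub_pow_ne_zero hu
  have hidx : ∀ {g : ℕ → ℕ}, (∀ n, n ≤ g n + k.natAbs) →
      Tendsto (qPochhammer u ∘ g) atTop (𝓝 (∏' j : ℕ, (1 - u ^ (j + 1)))) := fun hg =>
    (tendsto_qPochhammer hu).comp <| tendsto_atTop_atTop.2 fun b =>
      ⟨b + k.natAbs, fun n hn => by have := hg n; omega⟩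
  have hlim := (hidx (g := fun n => 2 * n) (by omega)).div
    ((hidx (g := fun n => ((n : ℤ) + k).toNat) (by omega)).mul
      (hidx (g := fun n => 2 * n - ((n : ℤ) + k).toNat) (by omega))) (mul_ne_zero hP hP)
  rw [div_mul_cancel_left₀ hP] at hlim
  refine hlim.congr' ?_
  filter_upwards [eventually_ge_atTop k.natAbs] with n hn
  rw [qBinomial, if_pos (by push_cast; omega)]
  rfl

lemma tprod_one_sub_sq_pow (hu : ‖u‖ < 1) :
    ∏' j : ℕ, (1 - (u ^ 2) ^ (j + 1)) =
      (∏' j : ℕ, (1 - u ^ (j + 1))) * ∏' j : ℕ, (1 + u ^ (j + 1)) := by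
  rw [← (ModularForm.multipliable_one_sub_pow hu).tprod_mul
    (Complex.multipliable_one_add_of_summable (summable_pow_succ hu))]
  exact tprod_congr fun j => by ring

/-- Gauss's identity, as the limit of `finiteTheta_eq_prod`. -/
theorem tsum_pow_mul_add_one_eq_tprod {w : ℂ} (hw : ‖w‖ < 1) (hw₀ : w ≠ 0) :
    ∑' n : ℕ, w ^ (n * (n + 1)) =
      (∏' j : ℕ, (1 - (w ^ 2) ^ (j + 1))) * (∏' j : ℕ, (1 + (w ^ 2) ^ (j + 1))) ^ 2 := by
  have hu : ‖w ^ 2‖ < 1 := norm_pow_lt_one hw two_ne_zero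
  have hP := tprod_one_sub_pow_ne_zero hu
  have hA : Multipliable fun j : ℕ => 1 + (w ^ 2) ^ (j + 1) :=
    Complex.multipliable_one_add_of_summable (summable_pow_succ hu)
  have hB : Multipliable fun j : ℕ => 1 + (w ^ 2) ^ j :=
    Complex.multipliable_one_add_of_summable (summable_geometric_of_norm_lt_one hu)
  have hprod : Tendsto (finiteTheta w) atTop
      (𝓝 (∏' j : ℕ, (1 + (w ^ 2) ^ (j + 1)) * (1 + (w ^ 2) ^ j))) := by
    simpa only [funext (finiteTheta_eq_prod hw₀ (pow_succ_ne_one_of_norm_lt_one hu))] using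
      (hA.mul hB).hasProd.tendsto_prod_nat
  have hsum : Tendsto (finiteTheta w) atTop
      (𝓝 (∑' k : ℤ, (∏' j : ℕ, (1 - (w ^ 2) ^ (j + 1)))⁻¹ * w ^ (k * (k + 1)))) := by
    obtain ⟨C, hC⟩ := exists_norm_qBinomial_le hu
    have hnorm : ‖(‖w‖)‖ < 1 := by rwa [norm_norm]
    refine (tendsto_tsum_of_dominated_convergence
      ((hasSum_zpow_mul_add_one hnorm).summable.mul_left C)
      (fun k => (tendsto_qBinomial_central hu k).mul_const _)
      (.of_forall fun n k => ?_)).congr fun n => ?_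
    · rw [norm_mul, norm_zpow]
      exact mul_le_mul_of_nonneg_right (hC _ _) (by positivity)
    · refine tsum_eq_sum fun k hk => ?_
      rw [mem_Icc] at hk
      rw [qBinomial_of_lt_zero_or_lt _ (by push_cast; omega), zero_mul]
  have hshift : ∏' j : ℕ, (1 + (w ^ 2) ^ j) = 2 * ∏' j : ℕ, (1 + (w ^ 2) ^ (j + 1)) := by
    rw [tprod_eq_zero_mul' (f := fun j : ℕ => 1 + (w ^ 2) ^ j) hA, pow_zero, one_add_one_eq_two]
  have key := tendsto_nhds_unique hprod hsum
  rw [hA.tprod_mul hB, hshift, tsum_mul_left, (hasSum_zpow_mul_add_one hw).tsum_eq] at key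
  field_simp at key
  linear_combination -key

end Analytic

lemma exp_two_pi_I_mul_natCast_mul (c : ℕ) (τ : ℂ) :
    cexp (2 * π * I * (c * τ)) = cexp (2 * π * I * τ) ^ c := by
  rw [← exp_nat_mul]
  ring_nf

/-- `η(16τ)² / η(8τ) = Σ_{n ≥ 0} q^{(2n+1)²}` with `q = e^{2πiτ}`, on the upper half-plane. -/
theorem stmt10 (τ : ℂ) (hτ : 0 < τ.im) :
    dedekindEta (16 * τ) ^ 2 / dedekindEta (8 * τ) =
      ∑' n : ℕ, Complex.exp (2 * π * I * τ) ^ ((2 * n + 1) ^ 2) := by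
  set q := cexp (2 * π * I * τ)
  have hq : ‖q‖ < 1 := UpperHalfPlane.norm_exp_two_pi_I_lt_one ⟨τ, hτ⟩
  set P := ∏' j : ℕ, (1 - (q ^ 8) ^ (j + 1))
  set A := ∏' j : ℕ, (1 + (q ^ 8) ^ (j + 1))
  have hη₁₆ : dedekindEta (16 * τ) = cexp (π * I * (16 * τ) / 12) * (P * A) := by
    rw [dedekindEta, ← tprod_one_sub_sq_pow (norm_pow_lt_one hq (by norm_num)), ← pow_mul,
      ← Nat.cast_ofNat, exp_two_pi_I_mul_natCast_mul]
  have hη₈ : dedekindEta (8 * τ) = cexp (π * I * (8 * τ) / 12) * P := by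
    rw [dedekindEta, ← Nat.cast_ofNat, exp_two_pi_I_mul_natCast_mul]
  have hprefactor : cexp (π * I * (16 * τ) / 12) ^ 2 = q * cexp (π * I * (8 * τ) / 12) := by
    rw [← exp_nat_mul, ← exp_add]
    ring_nf
  have hgauss : ∑' n : ℕ, (q ^ 4) ^ (n * (n + 1)) = P * A ^ 2 := by
    rw [tsum_pow_mul_add_one_eq_tprod (norm_pow_lt_one hq (by norm_num))
      (pow_ne_zero 4 (exp_ne_zero _)), ← pow_mul]
  have hodd : ∑' n : ℕ, q ^ ((2 * n + 1) ^ 2) = q * ∑' n : ℕ, (q ^ 4) ^ (n * (n + 1)) := by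
    rw [← tsum_mul_left]
    exact tsum_congr fun n => by rw [← pow_mul, ← pow_succ']; ring_nf
  rw [hη₁₆, hη₈, hodd, hgauss, div_eq_iff (mul_ne_zero (exp_ne_zero _)
    (tprod_one_sub_pow_ne_zero (norm_pow_lt_one hq (by norm_num))))]
  linear_combination (P * A) ^ 2 * hprefactor
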